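/- arXiv:1805.08853 — 7 statements merged into one kernel-verified Lean document; each statement's English description precedes it below -/
import Mathlib

section
/- Let σ₁₂ > 0 and α > 3, and define γ₁ : ℝ → ℝ by γ₁(ψ) = (3/(2√2))·σ₁₂·((1+ψ)/2)²·(2 − ψ + (α/4)(1−ψ)²). Then the second derivative satisfies γ₁″(1) > 0 and γ₁″(−1) > 0, i.e. γ₁ has a double-well (strictly convex) structure at the pure-phase values ψ = ±1. -/
/-!
Expanded, `γ₁` is the quartic `k (α/16 ψ⁴ - ψ³/4 - α/8 ψ² + 3/4 ψ + 1/2 + α/16)` with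
`k = 3σ₁₂/(2√2) > 0`, whose second derivative is `k (α - 3)/2` at `ψ = 1` and `k (α + 3)/2`
at `ψ = -1`.
-/

section Quartic

variable {𝕜 : Type*} [NontriviallyNormedField 𝕜]

theorem hasDerivAt_quartic (a b c d e x : 𝕜) :
    HasDerivAt (fun t => a * t ^ 4 + b * t ^ 3 + c * t ^ 2 + d * t + e)
      (4 * a * x ^ 3 + 3 * b * x ^ 2 + 2 * c * x + d) x := by
  refine (((((hasDerivAt_pow 4 x).const_mul a).add ((hasDerivAt_pow 3 x).const_mul b)).add
    ((hasDerivAt_pow 2 x).const_mul c)).add ((hasDerivAt_id x).const_mul d)).add_const e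
    |>.congr_deriv ?_
  norm_num
  ring

theorem deriv_quartic (a b c d e : 𝕜) :
    deriv (fun t => a * t ^ 4 + b * t ^ 3 + c * t ^ 2 + d * t + e) =
      fun t => 4 * a * t ^ 3 + 3 * b * t ^ 2 + 2 * c * t + d :=
  funext fun x => (hasDerivAt_quartic a b c d e x).deriv

theorem hasDerivAt_cubic (a b c d x : 𝕜) :
    HasDerivAt (fun t => a * t ^ 3 + b * t ^ 2 + c * t + d) (3 * a * x ^ 2 + 2 * b * x + c) x := by
  refine ((((hasDerivAt_pow 3 x).const_mul a).add ((hasDerivAt_pow 2 x).const_mul b)).add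
    ((hasDerivAt_id x).const_mul c)).add_const d |>.congr_deriv ?_
  norm_num
  ring

theorem deriv_cubic (a b c d : 𝕜) :
    deriv (fun t => a * t ^ 3 + b * t ^ 2 + c * t + d) =
      fun t => 3 * a * t ^ 2 + 2 * b * t + c :=
  funext fun x => (hasDerivAt_cubic a b c d x).deriv

theorem deriv_deriv_quartic (a b c d e x : 𝕜) :
    deriv (deriv fun t => a * t ^ 4 + b * t ^ 3 + c * t ^ 2 + d * t + e) x =
      12 * a * x ^ 2 + 6 * b * x + 2 * c := by
  rw [deriv_quartic, deriv_cubic]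
  ring

end Quartic

/-- For `σ₁₂ > 0` and `α > 3`, the dynamically consistent
interpolation `γ₁(ψ) = (3/(2√2))·σ₁₂·((1+ψ)/2)²·(2 − ψ + (α/4)(1−ψ)²)` has
strictly positive second derivative at the pure-phase values `ψ = ±1`
(double-well structure). -/
theorem gamma1_double_well (σ₁₂ α : ℝ) (hσ : 0 < σ₁₂) (hα : 3 < α)
    (γ₁ : ℝ → ℝ)
    (hγ₁ : ∀ ψ : ℝ, γ₁ ψ =
      3 / (2 * Real.sqrt 2) * σ₁₂ * ((1 + ψ) / 2) ^ 2 *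
        (2 - ψ + α / 4 * (1 - ψ) ^ 2)) :
    0 < deriv (deriv γ₁) 1 ∧ 0 < deriv (deriv γ₁) (-1) := by
  set k := 3 / (2 * Real.sqrt 2) * σ₁₂
  have hk : 0 < k := by positivity
  have hexpand : γ₁ = fun t => k * α / 16 * t ^ 4 + -k / 4 * t ^ 3 + -k * α / 8 * t ^ 2 +
      3 * k / 4 * t + k * (1 / 2 + α / 16) := by
    funext t
    rw [hγ₁]
    ring
  rw [hexpand, deriv_deriv_quartic, deriv_deriv_quartic]
  constructor <;> nlinarith
end

section
/- Let σ₁₃, σ₂₃ ≥ 0 with σ₁₃ ≠ σ₂₃, let α > 3, and define γ₂ : ℝ → ℝ by γ₂(φ) = (3/(2√2))·[σ₁₃((1+φ)/2)²(2−φ) + σ₂₃((1−φ)/2)²(2+φ) + (α/16)|σ₂₃−σ₁₃|(1−φ²)²]. Then γ₂″(1) > 0 and γ₂″(−1) > 0, i.e. γ₂ has a strictly convex double-well structure at the pure-phase values φ = ±1. -/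
open Polynomial

/-! γ₂ is a quartic polynomial, and at φ = ±1 its second derivative is
`3/(2√2) · (±(3/2)(σ₂₃ - σ₁₃) + (α/2)|σ₂₃ - σ₁₃|)`: for α > 3 the double-well term
dominates the interpolation term whatever the sign of σ₂₃ - σ₁₃. -/

theorem Polynomial.deriv_deriv_eval {𝕜 : Type*} [NontriviallyNormedField 𝕜] (p : 𝕜[X])
    (x : 𝕜) :
    deriv (deriv fun y => p.eval y) x = (derivative (derivative p)).eval x := by
  have hderiv : deriv (fun y => p.eval y) = fun y => p.derivative.eval y := by
    ext y
    exact p.deriv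
  rw [hderiv]
  exact p.derivative.deriv

theorem deriv_deriv_interpolation_add_double_well (c a b k φ : ℝ) :
    deriv (deriv fun x => c * (a * ((1 + x) / 2) ^ 2 * (2 - x) + b * ((1 - x) / 2) ^ 2 * (2 + x)
      + k * (1 - x ^ 2) ^ 2)) φ = c * (3 / 2 * (b - a) * φ + k * (12 * φ ^ 2 - 4)) := by
  have hpoly : (fun x => c * (a * ((1 + x) / 2) ^ 2 * (2 - x) + b * ((1 - x) / 2) ^ 2 * (2 + x)
      + k * (1 - x ^ 2) ^ 2)) = fun x => (C c * (C (a / 4) * (2 + 3 * X - X ^ 3)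
        + C (b / 4) * (2 - 3 * X + X ^ 3) + C k * (1 - 2 * X ^ 2 + X ^ 4))).eval x := by
    ext x
    simp only [eval_mul, eval_add, eval_sub, eval_C, eval_pow, eval_X, eval_ofNat, eval_one]
    ring
  rw [hpoly, Polynomial.deriv_deriv_eval]
  simp only [derivative_mul, derivative_C, derivative_add, derivative_sub, derivative_ofNat,
    derivative_X, derivative_X_pow, derivative_one, eval_mul, eval_C, eval_add, eval_sub,
    eval_pow, eval_X, eval_ofNat, eval_one, eval_zero, derivative_zero]
  ring

theorem gamma2_double_well_general (σ₁₃ σ₂₃ α : ℝ)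
    (hne : σ₁₃ ≠ σ₂₃) (hα : 3 < α) (γ₂ : ℝ → ℝ)
    (hγ₂ : ∀ φ : ℝ, γ₂ φ =
      3 / (2 * Real.sqrt 2) *
        (σ₁₃ * ((1 + φ) / 2) ^ 2 * (2 - φ) + σ₂₃ * ((1 - φ) / 2) ^ 2 * (2 + φ) +
          α / 16 * |σ₂₃ - σ₁₃| * (1 - φ ^ 2) ^ 2)) :
    0 < deriv (deriv γ₂) 1 ∧ 0 < deriv (deriv γ₂) (-1) := by
  rw [funext hγ₂, deriv_deriv_interpolation_add_double_well,
    deriv_deriv_interpolation_add_double_well]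
  have hc : 0 < 3 / (2 * Real.sqrt 2) := by positivity
  have hd : 0 < |σ₂₃ - σ₁₃| := abs_pos.mpr (sub_ne_zero.mpr hne.symm)
  have hdom : 3 / 2 * |σ₂₃ - σ₁₃| < α / 2 * |σ₂₃ - σ₁₃| := by gcongr
  constructor <;> apply mul_pos hc <;>
    linarith [neg_abs_le (σ₂₃ - σ₁₃), le_abs_self (σ₂₃ - σ₁₃)]

/-- For `σ₁₃, σ₂₃ ≥ 0` with `σ₁₃ ≠ σ₂₃` and `α > 3`, the
dynamically consistent interpolation
`γ₂(φ) = (3/(2√2))·[σ₁₃((1+φ)/2)²(2−φ) + σ₂₃((1−φ)/2)²(2+φ) + (α/16)|σ₂₃−σ₁₃|(1−φ²)²]`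
has strictly positive second derivative at `φ = ±1` (strictly convex
double-well structure at the pure-phase values). -/
theorem gamma2_double_well (σ₁₃ σ₂₃ α : ℝ) (h13 : 0 ≤ σ₁₃) (h23 : 0 ≤ σ₂₃)
    (hne : σ₁₃ ≠ σ₂₃) (hα : 3 < α) (γ₂ : ℝ → ℝ)
    (hγ₂ : ∀ φ : ℝ, γ₂ φ =
      3 / (2 * Real.sqrt 2) *
        (σ₁₃ * ((1 + φ) / 2) ^ 2 * (2 - φ) + σ₂₃ * ((1 - φ) / 2) ^ 2 * (2 + φ) +
          α / 16 * |σ₂₃ - σ₁₃| * (1 - φ ^ 2) ^ 2)) :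
    0 < deriv (deriv γ₂) 1 ∧ 0 < deriv (deriv γ₂) (-1) :=
  gamma2_double_well_general σ₁₃ σ₂₃ α hne hα γ₂ hγ₂
end

section
/- Let σ₁₃, σ₂₃ > 0 with σ₁₃ ≠ σ₂₃. For ε > 0 define γ₂^ε : ℝ → ℝ by γ₂^ε(φ) = (3/(2√2))·[σ₁₃((1+φ)/2)²(2−φ) + σ₂₃((1−φ)/2)²(2+φ) + ((3+ε)/16)|σ₂₃−σ₁₃|(1−φ²)²]. Then there exist constants C > 0 and ε₀ > 0 such that for all 0 < ε < ε₀: | sup_{−1 ≤ φ ≤ 1} γ₂^ε(φ) − (3/(2√2))·max(σ₁₃, σ₂₃) − (3/(2√2))·(|σ₂₃−σ₁₃|/108)·ε³ | ≤ C ε⁴. -/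
/-!
The two cubic weights `((1 ± φ)/2)² (2 ∓ φ)` sum to `1`, so for `σ₁₃ ≤ σ₂₃` the bracket of `γ₂^ε`
equals `σ₂₃ + (σ₂₃ - σ₁₃) g_ε(φ)`, where `g_ε` is the double well minus the weight of `σ₁₃`; the case
`σ₂₃ ≤ σ₁₃` is the mirror image `φ ↦ -φ`. The maximum of `g_ε` on `[-1, 1]` is exactly
`ε³ (4 + ε) / (16 (3 + ε)³)`, attained at `φ = -3/(3 + ε)`, and this differs from `ε³/108` by
`ε⁴ (81 + 36 ε + 4 ε²) / (432 (3 + ε)³) ≤ ε⁴`.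
-/

open Set

/-- `γ₂^ε(φ)` without the prefactor `3 / (2 √2)`. -/
noncomputable def gamma2Bracket (σ₁₃ σ₂₃ ε φ : ℝ) : ℝ :=
  σ₁₃ * ((1 + φ) / 2) ^ 2 * (2 - φ) + σ₂₃ * ((1 - φ) / 2) ^ 2 * (2 + φ) +
    (3 + ε) / 16 * |σ₂₃ - σ₁₃| * (1 - φ ^ 2) ^ 2

noncomputable def gamma2Excess (ε φ : ℝ) : ℝ :=
  (3 + ε) / 16 * (1 - φ ^ 2) ^ 2 - ((1 + φ) / 2) ^ 2 * (2 - φ)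

noncomputable def maxExcess (ε : ℝ) : ℝ :=
  ε ^ 3 * (4 + ε) / (16 * (3 + ε) ^ 3)

theorem gamma2Bracket_swap_neg (a b ε φ : ℝ) :
    gamma2Bracket b a ε (-φ) = gamma2Bracket a b ε φ := by
  simp only [gamma2Bracket, abs_sub_comm b a]
  ring

theorem gamma2Bracket_eq_of_le {a b : ℝ} (hab : a ≤ b) (ε φ : ℝ) :
    gamma2Bracket a b ε φ = b + (b - a) * gamma2Excess ε φ := by
  rw [gamma2Bracket, gamma2Excess, abs_of_nonneg (sub_nonneg.mpr hab)]
  ring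

theorem gamma2Excess_le_maxExcess {ε φ : ℝ} (hε : 0 ≤ ε) (hφ : φ ∈ Icc (-1 : ℝ) 1) :
    gamma2Excess ε φ ≤ maxExcess ε := by
  obtain ⟨hφ₁, hφ₂⟩ := hφ
  set Q := ε * (4 + ε) + 2 * (3 + ε) * (1 + φ) + (3 + ε) ^ 2 * ((1 + φ) * (1 - φ))
  have hQ : 0 ≤ Q := by
    have h₁ : 0 ≤ 1 + φ := by linarith
    have h₂ : 0 ≤ (1 + φ) * (1 - φ) := mul_nonneg h₁ (by linarith)
    positivity
  have hgap : maxExcess ε - gamma2Excess ε φ =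
      ((3 + ε) * (1 + φ) - ε) ^ 2 * Q / (16 * (3 + ε) ^ 3) := by
    have : 3 + ε ≠ 0 := by positivity
    rw [maxExcess, gamma2Excess]
    field_simp
    ring
  have : 0 ≤ maxExcess ε - gamma2Excess ε φ := hgap ▸ by positivity
  linarith

theorem gamma2Excess_neg_three_div {ε : ℝ} (hε : 0 ≤ ε) :
    gamma2Excess ε (-3 / (3 + ε)) = maxExcess ε := by
  have : 3 + ε ≠ 0 := by positivity
  rw [gamma2Excess, maxExcess]
  field_simp
  ring

theorem isGreatest_gamma2Excess {ε : ℝ} (hε : 0 ≤ ε) :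
    IsGreatest (gamma2Excess ε '' Icc (-1) 1) (maxExcess ε) := by
  refine ⟨⟨-3 / (3 + ε), ⟨?_, ?_⟩, gamma2Excess_neg_three_div hε⟩, ?_⟩
  · rw [le_div_iff₀ (by positivity)]; linarith
  · rw [div_le_iff₀ (by positivity)]; linarith
  · rintro _ ⟨φ, hφ, rfl⟩
    exact gamma2Excess_le_maxExcess hε hφ

theorem isGreatest_gamma2Bracket (a b : ℝ) {ε : ℝ} (hε : 0 ≤ ε) :
    IsGreatest (gamma2Bracket a b ε '' Icc (-1) 1) (max a b + |b - a| * maxExcess ε) := by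
  wlog hab : a ≤ b generalizing a b
  · have hswap : gamma2Bracket a b ε '' Icc (-1) 1 = gamma2Bracket b a ε '' Icc (-1) 1 :=
      calc gamma2Bracket a b ε '' Icc (-1) 1
          = gamma2Bracket b a ε ∘ Neg.neg '' Icc (-1) 1 :=
            image_congr fun φ _ => (gamma2Bracket_swap_neg a b ε φ).symm
        _ = gamma2Bracket b a ε '' Icc (-1) 1 := by rw [image_comp, image_neg_Icc, neg_neg]
    rw [hswap, max_comm, abs_sub_comm]
    exact this b a (le_of_not_ge hab)
  have hmono : Monotone fun t => b + (b - a) * t :=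
    (monotone_mul_left_of_nonneg (sub_nonneg.mpr hab)).const_add b
  have := hmono.map_isGreatest (isGreatest_gamma2Excess hε)
  rw [image_image] at this
  rwa [max_eq_right hab, abs_of_nonneg (sub_nonneg.mpr hab),
    image_congr fun φ _ => gamma2Bracket_eq_of_le hab ε φ]

theorem abs_maxExcess_sub_le {ε : ℝ} (hε : 0 ≤ ε) :
    |maxExcess ε - ε ^ 3 / 108| ≤ ε ^ 4 := by
  have h3 : 0 < 3 + ε := by linarith
  have hexpand : maxExcess ε - ε ^ 3 / 108 =
      -(ε ^ 4 * (81 + 36 * ε + 4 * ε ^ 2) / (432 * (3 + ε) ^ 3)) := by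
    rw [maxExcess]
    field_simp
    ring
  rw [hexpand, abs_neg, abs_of_nonneg (by positivity), div_le_iff₀ (by positivity)]
  gcongr
  nlinarith

theorem gamma2_max_asymptotics_general (σ₁₃ σ₂₃ : ℝ) (hne : σ₁₃ ≠ σ₂₃) :
    ∃ C > (0 : ℝ), ∃ ε₀ > (0 : ℝ), ∀ ε : ℝ, 0 < ε → ε < ε₀ →
      |sSup ((fun φ : ℝ =>
            3 / (2 * Real.sqrt 2) *
              (σ₁₃ * ((1 + φ) / 2) ^ 2 * (2 - φ) +
                σ₂₃ * ((1 - φ) / 2) ^ 2 * (2 + φ) +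
                (3 + ε) / 16 * |σ₂₃ - σ₁₃| * (1 - φ ^ 2) ^ 2)) ''
          Set.Icc (-1 : ℝ) 1)
          - 3 / (2 * Real.sqrt 2) * max σ₁₃ σ₂₃
          - 3 / (2 * Real.sqrt 2) * (|σ₂₃ - σ₁₃| / 108) * ε ^ 3| ≤ C * ε ^ 4 := by
  set s : ℝ := 3 / (2 * Real.sqrt 2)
  have hs : 0 < s := by positivity
  have hC : 0 < s * |σ₂₃ - σ₁₃| := mul_pos hs (abs_pos.mpr (sub_ne_zero.mpr hne.symm))
  refine ⟨s * |σ₂₃ - σ₁₃|, hC, 1, one_pos, fun ε hε _ => ?_⟩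
  have hmax := (monotone_mul_left_of_nonneg hs.le).map_isGreatest
    (isGreatest_gamma2Bracket σ₁₃ σ₂₃ hε.le)
  rw [image_image] at hmax
  simp only [gamma2Bracket] at hmax
  rw [hmax.csSup_eq,
    show s * (max σ₁₃ σ₂₃ + |σ₂₃ - σ₁₃| * maxExcess ε) - s * max σ₁₃ σ₂₃ -
      s * (|σ₂₃ - σ₁₃| / 108) * ε ^ 3 = s * |σ₂₃ - σ₁₃| * (maxExcess ε - ε ^ 3 / 108) by ring,
    abs_mul, abs_of_pos hC]
  gcongr
  exact abs_maxExcess_sub_le hε.le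

/-- Let `σ₁₃, σ₂₃ > 0` with `σ₁₃ ≠ σ₂₃`, and for `ε > 0` let
`γ₂^ε(φ) = (3/(2√2))·[σ₁₃((1+φ)/2)²(2−φ) + σ₂₃((1−φ)/2)²(2+φ) + ((3+ε)/16)|σ₂₃−σ₁₃|(1−φ²)²]`
(the consistent interpolation with double-well parameter `α = 3 + ε`). Then
there are `C > 0` and `ε₀ > 0` such that for all `0 < ε < ε₀`,
`| max_{−1≤φ≤1} γ₂^ε(φ) − (3/(2√2))·max(σ₁₃,σ₂₃) − (3/(2√2))·(|σ₂₃−σ₁₃|/108)·ε³ | ≤ C ε⁴`. -/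
theorem gamma2_max_asymptotics (σ₁₃ σ₂₃ : ℝ) (h13 : 0 < σ₁₃) (h23 : 0 < σ₂₃)
    (hne : σ₁₃ ≠ σ₂₃) :
    ∃ C > (0 : ℝ), ∃ ε₀ > (0 : ℝ), ∀ ε : ℝ, 0 < ε → ε < ε₀ →
      |sSup ((fun φ : ℝ =>
            3 / (2 * Real.sqrt 2) *
              (σ₁₃ * ((1 + φ) / 2) ^ 2 * (2 - φ) +
                σ₂₃ * ((1 - φ) / 2) ^ 2 * (2 + φ) +
                (3 + ε) / 16 * |σ₂₃ - σ₁₃| * (1 - φ ^ 2) ^ 2)) ''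
          Set.Icc (-1 : ℝ) 1)
          - 3 / (2 * Real.sqrt 2) * max σ₁₃ σ₂₃
          - 3 / (2 * Real.sqrt 2) * (|σ₂₃ - σ₁₃| / 108) * ε ^ 3| ≤ C * ε ^ 4 :=
  gamma2_max_asymptotics_general σ₁₃ σ₂₃ hne
end

section
/- Let V be a real inner product space, let σ₁₂, σ₁₃, σ₂₃ ∈ ℝ, and set the capillarity coefficients χ₁ = σ₁₂ + σ₁₃ − σ₂₃, χ₂ = σ₁₂ + σ₂₃ − σ₁₃, χ₃ = σ₁₃ + σ₂₃ − σ₁₂. For any φ, ψ ∈ ℝ and a, b ∈ V define g₁ = ((1+ψ)/4)·a + ((1+φ)/4)·b, g₂ = −((1+ψ)/4)·a + ((1−φ)/4)·b, g₃ = −(1/2)·b. Then χ₁‖g₁‖² + χ₂‖g₂‖² + χ₃‖g₃‖² = (1/2)·[ σ₁₂((1+ψ)/2)²‖a‖² + ((σ₁₃(1+φ) + σ₂₃(1−φ) − (1/2)σ₁₂(1−φ²))/2)‖b‖² + (σ₁₂φ + σ₁₃ − σ₂₃)((1+ψ)/2)⟨a, b⟩ ]. -/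
theorem norm_smul_add_smul_sq_real {V : Type*} [NormedAddCommGroup V] [InnerProductSpace ℝ V]
    (α β : ℝ) (a b : V) :
    ‖α • a + β • b‖ ^ 2 = α ^ 2 * ‖a‖ ^ 2 + 2 * (α * β) * inner ℝ a b + β ^ 2 * ‖b‖ ^ 2 := by
  rw [norm_add_sq_real, real_inner_smul_left, real_inner_smul_right, norm_smul, norm_smul,
    mul_pow, mul_pow, Real.norm_eq_abs, Real.norm_eq_abs, sq_abs, sq_abs]
  ring

/-- Let `V` be a real inner product space and set the
capillarity coefficients `χ₁ = σ₁₂ + σ₁₃ − σ₂₃`, `χ₂ = σ₁₂ + σ₂₃ − σ₁₃`,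
`χ₃ = σ₁₃ + σ₂₃ − σ₁₂`. With `g₁ = ((1+ψ)/4)a + ((1+φ)/4)b`,
`g₂ = −((1+ψ)/4)a + ((1−φ)/4)b`, `g₃ = −(1/2)b` (the gradients `∇cᵢ` under the
change of variables, with `a = ∇φ`, `b = ∇ψ`),
`χ₁‖g₁‖² + χ₂‖g₂‖² + χ₃‖g₃‖²` equals the degenerate-form quadratic expression,
exhibiting the cross-diffusion term `⟨a, b⟩`. -/
theorem gradient_energy_change_of_variables
    {V : Type*} [NormedAddCommGroup V] [InnerProductSpace ℝ V]
    (σ₁₂ σ₁₃ σ₂₃ χ₁ χ₂ χ₃ : ℝ)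
    (hχ₁ : χ₁ = σ₁₂ + σ₁₃ - σ₂₃) (hχ₂ : χ₂ = σ₁₂ + σ₂₃ - σ₁₃)
    (hχ₃ : χ₃ = σ₁₃ + σ₂₃ - σ₁₂)
    (φ ψ : ℝ) (a b g₁ g₂ g₃ : V)
    (hg₁ : g₁ = ((1 + ψ) / 4) • a + ((1 + φ) / 4) • b)
    (hg₂ : g₂ = (-((1 + ψ) / 4)) • a + ((1 - φ) / 4) • b)
    (hg₃ : g₃ = (-(1 / 2) : ℝ) • b) :
    χ₁ * ‖g₁‖ ^ 2 + χ₂ * ‖g₂‖ ^ 2 + χ₃ * ‖g₃‖ ^ 2 =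
      1 / 2 * (σ₁₂ * ((1 + ψ) / 2) ^ 2 * ‖a‖ ^ 2 +
        (σ₁₃ * (1 + φ) + σ₂₃ * (1 - φ) - 1 / 2 * σ₁₂ * (1 - φ ^ 2)) / 2 * ‖b‖ ^ 2 +
        (σ₁₂ * φ + σ₁₃ - σ₂₃) * ((1 + ψ) / 2) * (inner ℝ a b : ℝ)) := by
  have hg₃_sq : ‖g₃‖ ^ 2 = 1 / 4 * ‖b‖ ^ 2 := by
    rw [hg₃, norm_smul, mul_pow, Real.norm_eq_abs, sq_abs]
    norm_num
  rw [hχ₁, hχ₂, hχ₃, hg₁, hg₂, hg₃_sq, norm_smul_add_smul_sq_real, norm_smul_add_smul_sq_real]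
  ring
end

section
/- Let σ₁₂, σ₁₃, σ₂₃ ∈ ℝ and Λ ∈ ℝ, and set Σ₁ = σ₁₂ + σ₁₃ − σ₂₃, Σ₂ = σ₁₂ + σ₂₃ − σ₁₃, Σ₃ = σ₁₃ + σ₂₃ − σ₁₂. For φ, ψ ∈ ℝ set c = ((1+φ)/2)((1+ψ)/2), d = ((1−φ)/2)((1+ψ)/2), e = 1 − c − d, and define F = σ₁₂c²d² + e²(σ₁₃c² + σ₂₃d²) + c d e (Σ₁c + Σ₂d + Σ₃e) + Λ c²d²e². Then for all φ, ψ ∈ ℝ: F = (1/16)σ₁₂((1+ψ)/2)²(1−φ²)² + ((σ₁₃(1+φ) + σ₂₃(1−φ) − (1/2)σ₁₂(1−φ²))/32)(1−ψ²)² + (1/16)(1−φ²)(1−ψ²)((1+ψ)/2)²[σ₁₂ + (σ₁₃−σ₂₃)φ] − (1/64)σ₁₂(1−ψ²)((1+ψ)/2)((3+ψ)/2)(1−φ²)² + (1/256)Λ((1+ψ)/2)²(1−φ²)²(1−ψ²)². -/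
/-- Under the change of variables
`c = ((1+φ)/2)((1+ψ)/2)`, `d = ((1−φ)/2)((1+ψ)/2)`, `e = 1 − c − d`, and with
spreading coefficients `S₁ = σ₁₂ + σ₁₃ − σ₂₃`, `S₂ = σ₁₂ + σ₂₃ − σ₁₃`,
`S₃ = σ₁₃ + σ₂₃ − σ₁₂`, the consistent triple-well potential
`F = σ₁₂c²d² + e²(σ₁₃c² + σ₂₃d²) + cde(S₁c + S₂d + S₃e) + Λc²d²e²`
equals the stated expression in the label variables `(φ, ψ)`. -/
theorem consistent_potential_change_of_variables
    (σ₁₂ σ₁₃ σ₂₃ Λ S₁ S₂ S₃ : ℝ)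
    (hS₁ : S₁ = σ₁₂ + σ₁₃ - σ₂₃) (hS₂ : S₂ = σ₁₂ + σ₂₃ - σ₁₃)
    (hS₃ : S₃ = σ₁₃ + σ₂₃ - σ₁₂) :
    ∀ φ ψ : ℝ,
      (fun c d e : ℝ =>
          σ₁₂ * c ^ 2 * d ^ 2 + e ^ 2 * (σ₁₃ * c ^ 2 + σ₂₃ * d ^ 2) +
            c * d * e * (S₁ * c + S₂ * d + S₃ * e) + Λ * c ^ 2 * d ^ 2 * e ^ 2)
        ((1 + φ) / 2 * ((1 + ψ) / 2)) ((1 - φ) / 2 * ((1 + ψ) / 2))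
        (1 - (1 + φ) / 2 * ((1 + ψ) / 2) - (1 - φ) / 2 * ((1 + ψ) / 2)) =
      1 / 16 * σ₁₂ * ((1 + ψ) / 2) ^ 2 * (1 - φ ^ 2) ^ 2 +
        (σ₁₃ * (1 + φ) + σ₂₃ * (1 - φ) - 1 / 2 * σ₁₂ * (1 - φ ^ 2)) / 32 *
          (1 - ψ ^ 2) ^ 2 +
        1 / 16 * (1 - φ ^ 2) * (1 - ψ ^ 2) * ((1 + ψ) / 2) ^ 2 *
          (σ₁₂ + (σ₁₃ - σ₂₃) * φ) -
        1 / 64 * σ₁₂ * (1 - ψ ^ 2) * ((1 + ψ) / 2) * ((3 + ψ) / 2) *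
          (1 - φ ^ 2) ^ 2 +
        1 / 256 * Λ * ((1 + ψ) / 2) ^ 2 * (1 - φ ^ 2) ^ 2 * (1 - ψ ^ 2) ^ 2 := by
  intro φ ψ
  subst hS₁ hS₂ hS₃
  ring
end

section
/- Let d ≥ 1, T > 0, ε, M₁, M₂, σ₁₂ > 0, α ∈ ℝ, and let γ₁(ψ) = (3/(2√2))σ₁₂((1+ψ)/2)²(2−ψ+(α/4)(1−ψ)²) and let γ₂ : ℝ → ℝ be any smooth function. Suppose φ : (0,T) × 𝕋^d → ℝ is smooth and solves the binary Cahn–Hilliard equation φ_t = ∇·(M₁∇ζ) with ζ = −(3/(2√2))σ₁₂ ε Δφ + (3/(2√2))(σ₁₂/ε)(φ²−1)φ, and set ψ ≡ 1. Then the pair (φ, ψ) solves the degenerate ternary Cahn–Hilliard system φ_t = ∇·(M₁∇ζ_φ), ψ_t = ∇·(M₂∇ζ_ψ), where ζ_φ = −ε∇·(γ₁(ψ)∇φ) + (1/ε)γ₁(ψ)(φ²−1)φ + γ₂′(φ)((ε/2)|∇ψ|² + (1/(4ε))(ψ²−1)²) and ζ_ψ = −ε∇·(γ₂(φ)∇ψ)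 + (γ₂(φ)/ε)(ψ²−1)ψ + γ₁′(ψ)((ε/2)|∇φ|² + (1/(4ε))(φ²−1)²); in particular ζ_ψ ≡ 0 and ψ remains identically 1 (algebraic consistency). -/
open MeasureTheory

/-- Partial derivative in the `i`-th coordinate direction of a function on `ℝⁿ`. -/
noncomputable def pd (n : ℕ) (i : Fin n) (f : (Fin n → ℝ) → ℝ)
    (x : Fin n → ℝ) : ℝ :=
  fderiv ℝ f x (Pi.single i 1)

/-- Squared gradient `|∇f|² = Σᵢ (∂ᵢ f)²`. -/
noncomputable def gradSq (n : ℕ) (f : (Fin n → ℝ) → ℝ) (x : Fin n → ℝ) : ℝ :=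
  ∑ i, (pd n i f x) ^ 2

/-- Divergence `∇·v = Σᵢ ∂ᵢ vᵢ` of a vector field. -/
noncomputable def diver (n : ℕ) (v : (Fin n → ℝ) → (Fin n → ℝ))
    (x : Fin n → ℝ) : ℝ :=
  ∑ i, pd n i (fun y => v y i) x

/-- algebraic consistency of the degenerate ternary model.
With the dynamically consistent coefficient
`γ₁(ψ) = (3/(2√2))σ₁₂((1+ψ)/2)²(2−ψ+(α/4)(1−ψ)²)` and any smooth `γ₂`, if `φ`
solves the binary Cahn–Hilliard equation
`φₜ = ∇·(M₁∇ζ)`, `ζ = −(3/(2√2))σ₁₂εΔφ + (3/(2√2))(σ₁₂/ε)(φ²−1)φ`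
and `ψ ≡ 1`, then `(φ, ψ)` solves the degenerate ternary Cahn–Hilliard system;
in particular `ζ_ψ ≡ 0` and `ψ` remains identically `1`. -/
theorem degenerate_ternary_algebraic_consistency
    (n : ℕ) (hn : 1 ≤ n) (T : ℝ) (hT : 0 < T)
    (ε M₁ M₂ σ₁₂ : ℝ) (hε : 0 < ε) (hM₁ : 0 < M₁) (hM₂ : 0 < M₂)
    (hσ : 0 < σ₁₂) (α : ℝ)
    (γ₁ γ₂ : ℝ → ℝ)
    (hγ₁ : ∀ s : ℝ, γ₁ s =
      3 / (2 * Real.sqrt 2) * σ₁₂ * ((1 + s) / 2) ^ 2 *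
        (2 - s + α / 4 * (1 - s) ^ 2))
    (hγ₂ : ContDiff ℝ (⊤ : ℕ∞) γ₂)
    (φ ψ : ℝ → (Fin n → ℝ) → ℝ)
    (hφs : ContDiffOn ℝ (⊤ : ℕ∞) (fun q : ℝ × (Fin n → ℝ) => φ q.1 q.2)
      (Set.Ioo 0 T ×ˢ (Set.univ : Set (Fin n → ℝ))))
    (hφper : ∀ (t : ℝ) (x : Fin n → ℝ) (k : Fin n → ℤ),
      φ t (x + fun i => (k i : ℝ)) = φ t x)
    -- the third phase is absent: ψ ≡ 1
    (hψ : ∀ (t : ℝ) (x : Fin n → ℝ), ψ t x = 1)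
    (ζ : ℝ → (Fin n → ℝ) → ℝ)
    (hζ : ∀ (t : ℝ) (x : Fin n → ℝ), ζ t x =
      -(3 / (2 * Real.sqrt 2) * σ₁₂) * ε *
          (∑ i, pd n i (fun y => pd n i (φ t) y) x) +
        3 / (2 * Real.sqrt 2) * (σ₁₂ / ε) * ((φ t x) ^ 2 - 1) * φ t x)
    -- φ solves the binary Cahn–Hilliard equation φₜ = ∇·(M₁∇ζ)
    (hCH : ∀ t ∈ Set.Ioo (0 : ℝ) T, ∀ x : Fin n → ℝ,
      deriv (fun s => φ s x) t = diver n (fun y i => M₁ * pd n i (ζ t) y) x)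
    (ζφ ζψ : ℝ → (Fin n → ℝ) → ℝ)
    (hζφ : ∀ (t : ℝ) (x : Fin n → ℝ), ζφ t x =
      -ε * diver n (fun y i => γ₁ (ψ t y) * pd n i (φ t) y) x +
        1 / ε * γ₁ (ψ t x) * ((φ t x) ^ 2 - 1) * φ t x +
        deriv γ₂ (φ t x) *
          (ε / 2 * gradSq n (ψ t) x + 1 / (4 * ε) * ((ψ t x) ^ 2 - 1) ^ 2))
    (hζψ : ∀ (t : ℝ) (x : Fin n → ℝ), ζψ t x =
      -ε * diver n (fun y i => γ₂ (φ t y) * pd n i (ψ t) y) x +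
        γ₂ (φ t x) / ε * ((ψ t x) ^ 2 - 1) * ψ t x +
        deriv γ₁ (ψ t x) *
          (ε / 2 * gradSq n (φ t) x + 1 / (4 * ε) * ((φ t x) ^ 2 - 1) ^ 2)) :
    (∀ (t : ℝ) (x : Fin n → ℝ), ζψ t x = 0) ∧
      (∀ t ∈ Set.Ioo (0 : ℝ) T, ∀ x : Fin n → ℝ,
        deriv (fun s => φ s x) t =
          diver n (fun y i => M₁ * pd n i (ζφ t) y) x) ∧
      (∀ t ∈ Set.Ioo (0 : ℝ) T, ∀ x : Fin n → ℝ,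
        deriv (fun s => ψ s x) t =
          diver n (fun y i => M₂ * pd n i (ζψ t) y) x) ∧
      (∀ (t : ℝ) (x : Fin n → ℝ), ψ t x = 1) := by

  -- abbreviation for the constant γ₁(1)
  set c : ℝ := 3 / (2 * Real.sqrt 2) * σ₁₂ with hc
  have hγ11 : γ₁ 1 = c := by rw [hγ₁]; norm_num
  -- γ₁'(1) = 0
  have hder : deriv γ₁ 1 = 0 := by
    have hfun : γ₁ = fun s : ℝ => 3 / (2 * Real.sqrt 2) * σ₁₂ * ((1 + s) / 2) ^ 2 *
        (2 - s + α / 4 * (1 - s) ^ 2) := funext hγ₁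
    have h1 : HasDerivAt (fun s : ℝ => ((1 + s) / 2) ^ 2) 1 1 := by
      have h := (((hasDerivAt_id (1:ℝ)).const_add 1).div_const 2).pow 2
      exact h.congr_deriv (by norm_num)
    have h2 : HasDerivAt (fun s : ℝ => 2 - s + α / 4 * (1 - s) ^ 2) (-1) 1 := by
      have ha : HasDerivAt (fun s : ℝ => 2 - s) (-1) 1 := by
        simpa using (hasDerivAt_id (1:ℝ)).const_sub 2
      have hb : HasDerivAt (fun s : ℝ => (1 - s) ^ 2) 0 1 := by
        have h := (((hasDerivAt_id (1:ℝ)).const_sub 1)).pow 2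
        exact h.congr_deriv (by norm_num)
      have h := ha.add (hb.const_mul (α / 4))
      exact h.congr_deriv (by ring)
    have h3 := (h1.mul h2).const_mul (3 / (2 * Real.sqrt 2) * σ₁₂)
    have h4 : HasDerivAt γ₁ 0 1 := by
      rw [hfun]
      have e1 : (fun s : ℝ => 3 / (2 * Real.sqrt 2) * σ₁₂ * ((1 + s) / 2) ^ 2 *
          (2 - s + α / 4 * (1 - s) ^ 2)) = fun y => 3 / (2 * Real.sqrt 2) * σ₁₂ *
          (((fun s : ℝ => ((1 + s) / 2) ^ 2) * fun s : ℝ => 2 - s + α / 4 * (1 - s) ^ 2 : ℝ → ℝ) y) := by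
        funext s; simp only [Pi.mul_apply]; ring
      rw [e1]
      exact h3.congr_deriv (by norm_num)
    exact h4.deriv
  have hψconst : ∀ t : ℝ, ψ t = fun _ => (1:ℝ) := fun t => funext (hψ t)
  have hpdψ : ∀ (t : ℝ) (i : Fin n) (y : Fin n → ℝ), pd n i (ψ t) y = 0 := by
    intro t i y
    rw [hψconst]
    simp [pd]
  -- Part 1 : ζψ ≡ 0
  have P1 : ∀ (t : ℝ) (x : Fin n → ℝ), ζψ t x = 0 := by
    intro t x
    rw [hζψ t x]
    have hd : diver n (fun y i => γ₂ (φ t y) * pd n i (ψ t) y) x = 0 := by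
      unfold diver
      apply Finset.sum_eq_zero
      intro i _
      have hfun : (fun y => γ₂ (φ t y) * pd n i (ψ t) y) = fun _ => (0:ℝ) := by
        funext y; rw [hpdψ]; ring
      rw [hfun]
      simp [pd]
    rw [hd, hψ t x, hder]
    norm_num
  -- smoothness of φ t in space, for t ∈ (0,T)
  have hφsm : ∀ t ∈ Set.Ioo (0:ℝ) T, ContDiff ℝ (⊤ : ℕ∞) (φ t) := by
    intro t ht
    rw [← contDiffOn_univ]
    have heq : (φ t) = (fun q : ℝ × (Fin n → ℝ) => φ q.1 q.2) ∘ (fun x => (t, x)) := rfl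
    rw [heq]
    exact hφs.comp ((contDiff_const.prodMk contDiff_id).contDiffOn)
      (fun x _ => ⟨ht, Set.mem_univ x⟩)
  have hpdφsm : ∀ t ∈ Set.Ioo (0:ℝ) T, ∀ i : Fin n,
      ContDiff ℝ (⊤ : ℕ∞) (fun y => pd n i (φ t) y) := by
    intro t ht i
    exact ((hφsm t ht).fderiv_right (by simp)).clm_apply contDiff_const
  -- ζφ = ζ on (0,T)
  have hζeq : ∀ t ∈ Set.Ioo (0:ℝ) T, ∀ x : Fin n → ℝ, ζφ t x = ζ t x := by
    intro t ht x
    rw [hζφ t x, hζ t x]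
    have hg : gradSq n (ψ t) x = 0 := by
      unfold gradSq
      apply Finset.sum_eq_zero
      intro i _
      rw [hpdψ]; ring
    have hd : diver n (fun y i => γ₁ (ψ t y) * pd n i (φ t) y) x =
        c * ∑ i, pd n i (fun y => pd n i (φ t) y) x := by
      unfold diver
      rw [Finset.mul_sum]
      apply Finset.sum_congr rfl
      intro i _
      have hfun : (fun y => γ₁ (ψ t y) * pd n i (φ t) y)
          = fun y => c * pd n i (φ t) y := by
        funext y; rw [hψ, hγ11]
      rw [hfun]
      have hdiff := ((hpdφsm t ht i).differentiable (by simp)) x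
      simp only [pd] at hdiff ⊢
      rw [fderiv_const_mul hdiff c]
      simp
    rw [hd, hg, hψ t x, hγ11, hc]
    have hε' : ε ≠ 0 := ne_of_gt hε
    have h2 : Real.sqrt 2 ≠ 0 := by positivity
    field_simp
    ring
  refine ⟨P1, ?_, ?_, hψ⟩
  · intro t ht x
    have hfun : ζφ t = ζ t := funext (hζeq t ht)
    rw [hfun]
    exact hCH t ht x
  · intro t ht x
    have hL : (fun s => ψ s x) = fun _ => (1:ℝ) := funext fun s => hψ s x
    rw [hL, deriv_const]
    have hz : ζψ t = fun _ => (0:ℝ) := funext (P1 t)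
    unfold diver
    symm
    apply Finset.sum_eq_zero
    intro i _
    have hfun : (fun y => M₂ * pd n i (ζψ t) y) = fun _ => (0:ℝ) := by
      funext y
      rw [hz]
      simp [pd]
    rw [hfun]
    simp [pd]
end

section
/- Let b₁, b₂, b₃ ∈ ℝ and α ∈ ℝ, and define b_α : ℝ² → ℝ by b_α(φ,ψ) = (b₁((1−φ)/2)²(2+φ) + b₂((1+φ)/2)²(2−φ))((1+ψ)/2)²(2−ψ) + b₃((1−ψ)/2)²(2+ψ) + (α/16)|b₂−b₁|(1−φ²)²((1+ψ)/2)²(2−ψ) + (α/16)(|b₃−b₁|((1−φ)/2)²(2+φ) + |b₃−b₂|((1+φ)/2)²(2−φ))(1−ψ²)² + (α²/256)||b₃−b₁| − |b₃−b₂||(1−φ²)²(1−ψ²)². Then: (i) b_α(−1, 1) = b₁ and b_α(1, 1) = b₂; (ii) b_α(φ, −1) = b₃ for every φ ∈ ℝ; (iii) both partial derivatives ∂_φ b_α and ∂_ψ b_α vanish at (−1, 1) and at (1, 1), and ∂_ψ b_α(φ, −1) = 0 as well as ∂_φ b_α(φ, −1) = 0 for every φ ∈ ℝ. -/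
/-!
With `L, R, W` the functions `hermiteLeft, hermiteRight, quarticBump`,
`b_α(φ, ψ) = b₃ L(ψ) + P(φ) R(ψ) + Q(φ) W(ψ)`, where `P` and `Q` are again combinations of
`L, R, W`, now in `φ`. The cubics `L` and `R` are the Hermite basis on `[-1, 1]`: they take the
values `1, 0` and `0, 1` at `-1, 1` with zero slope there, and `W` has double zeros at `±1`.
So every combination `A L + B R + C W` equals `A` at `-1` and `B` at `1` with zero
derivative at both points, and all the claims follow from this applied in `ψ` and in `φ`.
-/

noncomputable section Blend

def hermiteLeft (x : ℝ) : ℝ := ((1 - x) / 2) ^ 2 * (2 + x)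

def hermiteRight (x : ℝ) : ℝ := ((1 + x) / 2) ^ 2 * (2 - x)

def quarticBump (x : ℝ) : ℝ := (1 - x ^ 2) ^ 2

def blend (A B C x : ℝ) : ℝ := A * hermiteLeft x + B * hermiteRight x + C * quarticBump x

variable (A B C : ℝ)

@[simp]
theorem blend_neg_one : blend A B C (-1) = A := by
  norm_num [blend, hermiteLeft, hermiteRight, quarticBump]

@[simp]
theorem blend_one : blend A B C 1 = B := by
  norm_num [blend, hermiteLeft, hermiteRight, quarticBump]

theorem hasDerivAt_blend (x : ℝ) :
    HasDerivAt (blend A B C) ((1 - x ^ 2) * (3 / 4 * (B - A) - 4 * C * x)) x := by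
  have hL : HasDerivAt hermiteLeft (-(3 / 4) * (1 - x ^ 2)) x :=
    ((((hasDerivAt_id' x).const_sub 1).div_const 2).fun_pow 2 |>.mul
      ((hasDerivAt_id' x).const_add 2)).congr_deriv (by ring)
  have hR : HasDerivAt hermiteRight (3 / 4 * (1 - x ^ 2)) x :=
    ((((hasDerivAt_id' x).const_add 1).div_const 2).fun_pow 2 |>.mul
      ((hasDerivAt_id' x).const_sub 2)).congr_deriv (by ring)
  have hW : HasDerivAt quarticBump (-4 * x * (1 - x ^ 2)) x :=
    (((hasDerivAt_pow 2 x).const_sub 1).fun_pow 2).congr_deriv (by ring)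
  exact (((hL.const_mul A).add (hR.const_mul B)).add (hW.const_mul C)).congr_deriv (by ring)

theorem deriv_blend_of_sq_eq_one {x : ℝ} (hx : x ^ 2 = 1) : deriv (blend A B C) x = 0 := by
  rw [(hasDerivAt_blend A B C x).deriv, hx, sub_self, zero_mul]

end Blend

/-- The proposed consistent interpolation `b_α(φ,ψ)` of a
physical parameter with pure values `b₁` at `(φ,ψ) = (−1,1)`, `b₂` at `(1,1)`
and `b₃` on `ψ = −1` attains those pure values and has vanishing partial
derivatives there. -/
theorem three_phase_interpolation_consistency (b₁ b₂ b₃ α : ℝ)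
    (b : ℝ → ℝ → ℝ)
    (hb : ∀ φ ψ : ℝ, b φ ψ =
      (b₁ * ((1 - φ) / 2) ^ 2 * (2 + φ) + b₂ * ((1 + φ) / 2) ^ 2 * (2 - φ)) *
          (((1 + ψ) / 2) ^ 2 * (2 - ψ)) +
        b₃ * ((1 - ψ) / 2) ^ 2 * (2 + ψ) +
        α / 16 * |b₂ - b₁| * (1 - φ ^ 2) ^ 2 * (((1 + ψ) / 2) ^ 2 * (2 - ψ)) +
        α / 16 * (|b₃ - b₁| * ((1 - φ) / 2) ^ 2 * (2 + φ) +
            |b₃ - b₂| * ((1 + φ) / 2) ^ 2 * (2 - φ)) * (1 - ψ ^ 2) ^ 2 +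
        α ^ 2 / 16 ^ 2 * |(|b₃ - b₁| - |b₃ - b₂|)| * (1 - φ ^ 2) ^ 2 *
          (1 - ψ ^ 2) ^ 2) :
    (b (-1) 1 = b₁ ∧ b 1 1 = b₂) ∧
      (∀ φ : ℝ, b φ (-1) = b₃) ∧
      ((deriv (fun φ => b φ 1) (-1) = 0 ∧ deriv (fun ψ => b (-1) ψ) 1 = 0) ∧
        (deriv (fun φ => b φ 1) 1 = 0 ∧ deriv (fun ψ => b 1 ψ) 1 = 0) ∧
        (∀ φ : ℝ, deriv (fun ψ => b φ ψ) (-1) = 0) ∧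
        (∀ φ : ℝ, deriv (fun φ' => b φ' (-1)) φ = 0)) := by
  set P := blend b₁ b₂ (α / 16 * |b₂ - b₁|)
  set Q := blend (α / 16 * |b₃ - b₁|) (α / 16 * |b₃ - b₂|)
    (α ^ 2 / 16 ^ 2 * |(|b₃ - b₁| - |b₃ - b₂|)|)
  have h_blend : ∀ φ, (fun ψ => b φ ψ) = blend b₃ (P φ) (Q φ) := fun φ ↦ by
    funext ψ
    simp only [hb, P, Q, blend, hermiteLeft, hermiteRight, quarticBump]
    ring
  have h_top : (fun φ => b φ 1) = P := funext fun φ ↦ by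
    simpa using congrFun (h_blend φ) 1
  have h_bottom : (fun φ => b φ (-1)) = fun _ ↦ b₃ := funext fun φ ↦ by
    simpa using congrFun (h_blend φ) (-1)
  have h_flat : ∀ φ {ψ : ℝ}, ψ ^ 2 = 1 → deriv (fun ψ => b φ ψ) ψ = 0 := fun φ _ hψ ↦ by
    rw [h_blend, deriv_blend_of_sq_eq_one _ _ _ hψ]
  refine ⟨⟨?_, ?_⟩, congrFun h_bottom, ⟨?_, h_flat _ (by norm_num)⟩,
    ⟨?_, h_flat _ (by norm_num)⟩, fun φ ↦ h_flat φ (by norm_num), fun φ ↦ ?_⟩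
  · simpa [P] using congrFun h_top (-1)
  · simpa [P] using congrFun h_top 1
  · rw [h_top, deriv_blend_of_sq_eq_one _ _ _ (by norm_num)]
  · rw [h_top, deriv_blend_of_sq_eq_one _ _ _ (by norm_num)]
  · rw [h_bottom, deriv_const]
end
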